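/- There is a constant c₂ (not depending on e^{Q_n} and n) such that: if V_n ∈ L_n(m,M) with m = (2(1+e^{Q_n}))^{−1} and M = q²/2, and n is sufficiently large, then the maximum absolute row sum norm of the inverse satisfies ‖V_n^{−1}‖_∞ ≤ c₂(1+e^{Q_n})³/(n−1). -/

import Mathlib

open Finset

/-- The matrix class `L_n(m, M)`: symmetric nonnegative matrices whose diagonal entries equal
the corresponding off-diagonal row sums, with all off-diagonal entries in `[m, M]`. -/
def MatrixClassL (n : ℕ) (m M : ℝ) (V : Matrix (Fin n) (Fin n) ℝ) : Prop :=
  V.IsSymm ∧ (∀ i, V i i = ∑ j ∈ Finset.univ.erase i, V i j) ∧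
    ∀ i j, i ≠ j → m ≤ V i j ∧ V i j ≤ M

open Matrix

/-!
The quadratic form of `V` is `½ ∑_{i ≠ j} V i j (x i + x j)² ≥ m (n - 2) ∑ x i²`, so `V` is
invertible and every entry of a row `u` of `V⁻¹` (which solves `V u = e_l`) is bounded by
`B = 1 / (m (n - 2))`. This is only `O(1/n)`, so the real work is off the diagonal: for `k ≠ l` the
row satisfies `u k = -∑ j, P k j * u j` with the stochastic matrix `P k j = V k j / V k k`, whose
off-diagonal entries lie between `δ = m / (M (n - 1))` and `κ = M / (m (n - 1))`. Let `u a` and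
`u b` be the largest and smallest entries off `l`. The equations at `a` and `b` give
`|u a + u b| ≤ 2 κ B`, and subtracting the two equations, the rows `P a` and `P b` overlap in mass
at least `(n - 2) δ`, which contracts the oscillation: `(n - 2) δ (u a - u b) ≤ 2 κ B`. Hence all
off-diagonal entries are `O(M² / (m³ n²))` and the row sum is `O(M² / (m³ n))`.
-/

theorem sum_abs_sub_le_of_le_on {ι : Type*} [Fintype ι] {a b : ι → ℝ} {T : Finset ι} {δ : ℝ}
    (ha : ∀ j, 0 ≤ a j) (hb : ∀ j, 0 ≤ b j) (haT : ∀ j ∈ T, δ ≤ a j) (hbT : ∀ j ∈ T, δ ≤ b j) :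
    ∑ j, |a j - b j| ≤ ∑ j, a j + ∑ j, b j - 2 * (#T * δ) := by
  have hmin : #T * δ ≤ ∑ j, min (a j) (b j) := calc
    #T * δ ≤ ∑ j ∈ T, min (a j) (b j) := by
      rw [← nsmul_eq_mul]
      exact card_nsmul_le_sum _ _ _ fun j hj => le_min (haT j hj) (hbT j hj)
    _ ≤ ∑ j, min (a j) (b j) :=
      sum_le_sum_of_subset_of_nonneg (subset_univ T) fun j _ _ => le_min (ha j) (hb j)
  have habs : ∀ j, |a j - b j| = a j + b j - 2 * min (a j) (b j) := fun j => by
    rw [← min_add_max (a j) (b j), abs_sub_comm, ← max_sub_min_eq_abs]; ring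
  simp only [habs, sum_sub_distrib, sum_add_distrib, ← mul_sum]
  linarith

noncomputable def transitionMatrix {ι : Type*} [DecidableEq ι] (V : Matrix ι ι ℝ) : Matrix ι ι ℝ :=
  of fun k j => if j = k then 0 else V k j / V k k

theorem transitionMatrix_apply_self {ι : Type*} [DecidableEq ι] {V : Matrix ι ι ℝ} (k : ι) :
    transitionMatrix V k k = 0 :=
  if_pos rfl

theorem transitionMatrix_apply_of_ne {ι : Type*} [DecidableEq ι] {V : Matrix ι ι ℝ} {k j : ι}
    (h : j ≠ k) : transitionMatrix V k j = V k j / V k k :=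
  if_neg h

variable {ι : Type*} [Fintype ι] [DecidableEq ι]

section StochasticRecursion

variable {P : Matrix ι ι ℝ} {w : ι → ℝ} {l : ι}

theorem add_le_mul_sub_of_add_mulVec_eq_zero {k : ι} {s : ℝ} (hP : ∀ j, 0 ≤ P k j)
    (hP1 : ∑ j, P k j = 1) (hw : w k + (P *ᵥ w) k = 0) (hs : ∀ j, j ≠ l → s ≤ w j) :
    w k + s ≤ P k l * (s - w l) := by
  have hsplit : ∑ j, P k j * (w j - s) =
      P k l * (w l - s) + ∑ j ∈ univ.erase l, P k j * (w j - s) :=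
    (add_sum_erase _ _ (mem_univ l)).symm
  have hrest : 0 ≤ ∑ j ∈ univ.erase l, P k j * (w j - s) :=
    sum_nonneg fun j hj => mul_nonneg (hP j) (sub_nonneg.2 (hs j (ne_of_mem_erase hj)))
  have hPw : (P *ᵥ w) k = ∑ j, P k j * (w j - s) + s := by
    simp only [mulVec, dotProduct, mul_sub, sum_sub_distrib, ← sum_mul, hP1]; ring
  linarith

theorem sub_le_of_add_mulVec_eq_zero {a b : ι} {S s δ : ℝ} (hab : a ≠ b) (hal : a ≠ l)
    (hP : ∀ k j, 0 ≤ P k j) (hP1 : ∀ k, ∑ j, P k j = 1) (hPδ : ∀ k j, j ≠ k → δ ≤ P k j)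
    (ha : w a + (P *ᵥ w) a = 0) (hb : w b + (P *ᵥ w) b = 0)
    (hS : ∀ j, j ≠ l → w j ≤ S) (hs : ∀ j, j ≠ l → s ≤ w j) :
    w a - w b ≤ |P b l - P a l| * |w l - (S + s) / 2| +
      (1 - (Fintype.card ι - 2) * δ) * (S - s) := by
  set c : ι → ℝ := fun j => P b j - P a j
  set μ := (S + s) / 2 with hμ
  -- `c` has total mass zero, so it only sees the deviation of `w` from the midpoint `μ`
  have hc : w a - w b = ∑ j, c j * (w j - μ) := by
    simp only [c, sub_mul, mul_sub, sum_sub_distrib, ← sum_mul, hP1, mulVec, dotProduct] at ha hb ⊢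
    linarith
  set T := (univ.erase a).erase b
  have hT : (#T : ℝ) = Fintype.card ι - 2 := by
    rw [cast_card_erase_of_mem (mem_erase.2 ⟨hab.symm, mem_univ b⟩),
      cast_card_erase_of_mem (mem_univ a), card_univ]
    ring
  have hmass : ∑ j, |c j| ≤ 2 - 2 * ((Fintype.card ι - 2) * δ) := by
    have := sum_abs_sub_le_of_le_on (T := T) (δ := δ) (hP b) (hP a)
      (fun j hj => hPδ b j (ne_of_mem_erase hj))
      (fun j hj => hPδ a j (ne_of_mem_erase (mem_of_mem_erase hj)))
    rw [hP1, hP1, hT] at this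
    show ∑ j, |P b j - P a j| ≤ _
    linarith
  have hdev : ∀ j, j ≠ l → |w j - μ| ≤ (S - s) / 2 := fun j hj => by
    rw [abs_le]; constructor <;> linarith [hS j hj, hs j hj, hμ]
  have hsS : 0 ≤ (S - s) / 2 := by linarith [(hs a hal).trans (hS a hal)]
  calc w a - w b ≤ ∑ j, |c j| * |w j - μ| := by
        rw [hc]
        refine (le_abs_self _).trans <| (abs_sum_le_sum_abs _ _).trans_eq ?_
        simp only [abs_mul]
    _ = |c l| * |w l - μ| + ∑ j ∈ univ.erase l, |c j| * |w j - μ| :=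
        (add_sum_erase _ _ (mem_univ l)).symm
    _ ≤ |c l| * |w l - μ| + ∑ j ∈ univ.erase l, |c j| * ((S - s) / 2) := by
        gcongr with j hj
        exact hdev j (ne_of_mem_erase hj)
    _ ≤ |c l| * |w l - μ| + (∑ j, |c j|) * ((S - s) / 2) := by
        rw [sum_mul]
        exact add_le_add le_rfl
          (sum_le_sum_of_subset_of_nonneg (subset_univ _) fun j _ _ => by positivity)
    _ ≤ _ := by nlinarith

theorem abs_le_of_add_mulVec_eq_zero {B κ δ : ℝ} (hn : 2 < Fintype.card ι) (hδ : 0 < δ)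
    (hP : ∀ k j, 0 ≤ P k j) (hP1 : ∀ k, ∑ j, P k j = 1) (hPκ : ∀ k, P k l ≤ κ)
    (hPδ : ∀ k j, j ≠ k → δ ≤ P k j) (hw : ∀ k, k ≠ l → w k + (P *ᵥ w) k = 0)
    (hB : ∀ j, |w j| ≤ B) {k : ι} (hk : k ≠ l) :
    |w k| ≤ κ * B + κ * B / ((Fintype.card ι - 2) * δ) := by
  have hne : (univ.erase l).Nonempty := ⟨k, mem_erase.2 ⟨hk, mem_univ k⟩⟩
  obtain ⟨a, ha, hmax⟩ := exists_max_image (univ.erase l) w hne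
  obtain ⟨b, hb, hmin⟩ := exists_min_image (univ.erase l) w hne
  have hal := ne_of_mem_erase ha
  have hbl := ne_of_mem_erase hb
  have hS : ∀ j, j ≠ l → w j ≤ w a := fun j hj => hmax j (mem_erase.2 ⟨hj, mem_univ j⟩)
  have hs : ∀ j, j ≠ l → w b ≤ w j := fun j hj => hmin j (mem_erase.2 ⟨hj, mem_univ j⟩)
  have hB0 : 0 ≤ B := (abs_nonneg _).trans (hB l)
  have hκ : 0 ≤ κ := (hP a l).trans (hPκ a)
  have hwB := fun j => abs_le.1 (hB j)
  have hcol : ∀ i, P i l * (2 * B) ≤ κ * (2 * B) := fun i =>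
    mul_le_mul_of_nonneg_right (hPκ i) (by positivity)
  have hsum_le : w a + w b ≤ 2 * (κ * B) := by
    have := add_le_mul_sub_of_add_mulVec_eq_zero (hP a) (hP1 a) (hw a hal) hs
    nlinarith [hwB b, hwB l, hcol a, hP a l]
  have hsum_ge : -(2 * (κ * B)) ≤ w a + w b := by
    have hw' : -w b + (P *ᵥ -w) b = 0 := by
      simp only [mulVec_neg, Pi.neg_apply]
      linarith [hw b hbl]
    have := add_le_mul_sub_of_add_mulVec_eq_zero (w := -w) (s := -w a) (hP b) (hP1 b) hw'
      fun j hj => neg_le_neg (hS j hj)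
    simp only [Pi.neg_apply] at this
    nlinarith [hwB a, hwB l, hcol b, hP b l]
  have hD : 0 < (Fintype.card ι - 2) * δ := by
    have : (2 : ℝ) < Fintype.card ι := by exact_mod_cast hn
    nlinarith
  have hosc : w a - w b ≤ 2 * (κ * B) / ((Fintype.card ι - 2) * δ) := by
    rw [le_div_iff₀ hD]
    rcases eq_or_ne a b with rfl | hab
    · simp only [sub_self, zero_mul]; positivity
    have := sub_le_of_add_mulVec_eq_zero hab hal hP hP1 hPδ (hw a hal) (hw b hbl) hS hs
    have h1 : |P b l - P a l| ≤ κ := abs_sub_le_of_nonneg_of_le (hP b l) (hPκ b) (hP a l) (hPκ a)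
    have h2 : |w l - (w a + w b) / 2| ≤ 2 * B := by
      rw [abs_le]; constructor <;> linarith [hwB a, hwB b, hwB l]
    nlinarith [mul_le_mul h1 h2 (abs_nonneg _) hκ]
  rw [mul_div_assoc] at hosc
  rw [abs_le]
  constructor <;> linarith [hS k hk, hs k hk]

end StochasticRecursion

section transitionMatrix

variable {V : Matrix ι ι ℝ}

theorem mulVec_apply_eq_mul_add_transitionMatrix_mulVec {k : ι} (hk : V k k ≠ 0) (u : ι → ℝ) :
    (V *ᵥ u) k = V k k * (u k + (transitionMatrix V *ᵥ u) k) := by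
  simp only [mulVec, dotProduct]
  rw [← add_sum_erase _ _ (mem_univ k), ← add_sum_erase _ _ (mem_univ k),
    transitionMatrix_apply_self, zero_mul, zero_add, mul_add, mul_sum]
  congr 1
  refine sum_congr rfl fun j hj => ?_
  rw [transitionMatrix_apply_of_ne (ne_of_mem_erase hj)]
  field_simp

theorem sum_transitionMatrix (hdiag : ∀ i, V i i = ∑ j ∈ univ.erase i, V i j) {k : ι}
    (hk : V k k ≠ 0) : ∑ j, transitionMatrix V k j = 1 := by
  rw [← add_sum_erase _ _ (mem_univ k), transitionMatrix_apply_self, zero_add,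
    sum_congr rfl fun j hj => transitionMatrix_apply_of_ne (ne_of_mem_erase hj), ← sum_div,
    ← hdiag k, div_self hk]

theorem add_transitionMatrix_mulVec_eq_zero {u : ι → ℝ} {k l : ι} (hk : V k k ≠ 0)
    (hu : V *ᵥ u = Pi.single l 1) (hkl : k ≠ l) : u k + (transitionMatrix V *ᵥ u) k = 0 := by
  have := mulVec_apply_eq_mul_add_transitionMatrix_mulVec hk u
  rw [hu, Pi.single_eq_of_ne hkl, zero_eq_mul] at this
  exact this.resolve_left hk

end transitionMatrix

theorem two_mul_dotProduct_mulVec_eq_sum_sq {V : Matrix ι ι ℝ} (hV : V.IsSymm)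
    (hdiag : ∀ i, V i i = ∑ j ∈ univ.erase i, V i j) (x : ι → ℝ) :
    2 * (x ⬝ᵥ V *ᵥ x) = ∑ i, ∑ j ∈ univ.erase i, V i j * (x i + x j) ^ 2 := by
  have hrow : x ⬝ᵥ V *ᵥ x = ∑ i, ∑ j ∈ univ.erase i, V i j * (x i ^ 2 + x i * x j) := by
    refine sum_congr rfl fun i _ => ?_
    rw [mulVec, dotProduct, ← add_sum_erase _ _ (mem_univ i), hdiag i, mul_add, sum_mul, mul_sum,
      mul_sum, ← sum_add_distrib]
    exact sum_congr rfl fun j _ => by ring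
  have hswap : ∑ i, ∑ j ∈ univ.erase i, V i j * x j ^ 2 =
      ∑ i, ∑ j ∈ univ.erase i, V i j * x i ^ 2 := by
    rw [sum_comm' (t' := univ) (s' := fun j => univ.erase j) (by simp [eq_comm])]
    exact sum_congr rfl fun i _ => sum_congr rfl fun j _ => by rw [hV.apply i j]
  have hexpand : ∀ i j, V i j * (x i + x j) ^ 2 =
      2 * (V i j * (x i ^ 2 + x i * x j)) + (V i j * x j ^ 2 - V i j * x i ^ 2) := fun i j => by
    ring
  simp only [hexpand, sum_add_distrib, sum_sub_distrib, ← mul_sum, hswap, hrow]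
  ring

theorem sum_sum_erase_add_sq (x : ι → ℝ) :
    ∑ i, ∑ j ∈ univ.erase i, (x i + x j) ^ 2 =
      2 * ((Fintype.card ι - 2) * ∑ i, x i ^ 2 + (∑ i, x i) ^ 2) := by
  have h : ∀ i, ∑ j ∈ univ.erase i, (x i + x j) ^ 2 =
      (Fintype.card ι - 4) * x i ^ 2 + 2 * x i * ∑ j, x j + ∑ j, x j ^ 2 := fun i => by
    rw [sum_erase_eq_sub (mem_univ i)]
    simp only [add_sq, sum_add_distrib, sum_const, card_univ, nsmul_eq_mul, ← mul_sum]
    ring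
  simp only [h, sum_add_distrib, ← sum_mul, ← mul_sum, sum_const, card_univ, nsmul_eq_mul]
  ring

theorem mul_sum_sq_le_dotProduct_mulVec {V : Matrix ι ι ℝ} {m : ℝ} (hV : V.IsSymm)
    (hdiag : ∀ i, V i i = ∑ j ∈ univ.erase i, V i j) (hm : ∀ i j, i ≠ j → m ≤ V i j)
    (x : ι → ℝ) :
    m * ((Fintype.card ι - 2) * ∑ i, x i ^ 2 + (∑ i, x i) ^ 2) ≤ x ⬝ᵥ V *ᵥ x := by
  have h : ∑ i, ∑ j ∈ univ.erase i, m * (x i + x j) ^ 2 ≤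
      ∑ i, ∑ j ∈ univ.erase i, V i j * (x i + x j) ^ 2 :=
    sum_le_sum fun i _ => sum_le_sum fun j hj =>
      mul_le_mul_of_nonneg_right (hm i j (ne_of_mem_erase hj).symm) (sq_nonneg _)
  rw [← two_mul_dotProduct_mulVec_eq_sum_sq hV hdiag] at h
  simp only [← mul_sum, sum_sum_erase_add_sq] at h
  linarith

theorem isUnit_det_of_coercive {V : Matrix ι ι ℝ} {c : ℝ} (hc : 0 < c)
    (hV : ∀ x, c * ∑ i, x i ^ 2 ≤ x ⬝ᵥ V *ᵥ x) : IsUnit V.det := by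
  refine isUnit_iff_ne_zero.2 fun hdet => ?_
  obtain ⟨x, hx, hVx⟩ := exists_mulVec_eq_zero_iff.2 hdet
  have hsq : ∑ i, x i ^ 2 ≤ 0 := by
    have := hV x
    rw [hVx, dotProduct_zero] at this
    exact nonpos_of_mul_nonpos_right this hc
  have hsq0 :=
    (sum_eq_zero_iff_of_nonneg fun j _ => sq_nonneg (x j)).1 (hsq.antisymm (by positivity))
  exact hx (funext fun i => pow_eq_zero_iff two_ne_zero |>.1 (hsq0 i (mem_univ i)))

theorem abs_le_inv_of_mulVec_eq_single {V : Matrix ι ι ℝ} {c : ℝ} (hc : 0 < c)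
    (hV : ∀ x, c * ∑ i, x i ^ 2 ≤ x ⬝ᵥ V *ᵥ x) {u : ι → ℝ} {l : ι}
    (hu : V *ᵥ u = Pi.single l 1) (k : ι) : |u k| ≤ c⁻¹ := by
  have hquad : ∀ j, c * u j ^ 2 ≤ u l := fun j => by
    have := hV u
    rw [hu, dotProduct_single, mul_one] at this
    exact (mul_le_mul_of_nonneg_left (single_le_sum (fun i _ => sq_nonneg (u i)) (mem_univ j))
      hc.le).trans this
  have hl : c * u l ≤ 1 := by nlinarith [hquad l]
  have hk : (c * u k) ^ 2 ≤ 1 ^ 2 := by nlinarith [hquad k]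
  have := abs_le_of_sq_le_sq hk zero_le_one
  rw [abs_mul, abs_of_pos hc] at this
  rw [← one_div, le_div_iff₀ hc]; linarith

theorem Matrix.IsSymm.mulVec_inv_row {R : Type*} [CommRing R] {V : Matrix ι ι R} (hV : V.IsSymm)
    (hdet : IsUnit V.det) (i : ι) : V *ᵥ V⁻¹ i = Pi.single i 1 := by
  ext k
  have h := congr_fun (congr_fun (nonsing_inv_mul V hdet) i) k
  rw [mul_apply, one_apply] at h
  rw [mulVec, dotProduct, Pi.single_apply]
  convert h using 1
  · exact sum_congr rfl fun j _ => by rw [hV.apply j k, mul_comm]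
  · simp only [eq_comm]

section MatrixClass

variable {V : Matrix ι ι ℝ} {m M : ℝ}

theorem apply_self_mem_Icc (hdiag : ∀ i, V i i = ∑ j ∈ univ.erase i, V i j)
    (hbound : ∀ i j, i ≠ j → m ≤ V i j ∧ V i j ≤ M) (k : ι) :
    V k k ∈ Set.Icc (m * (Fintype.card ι - 1)) (M * (Fintype.card ι - 1)) := by
  have hcard : (#(univ.erase k) : ℝ) = Fintype.card ι - 1 := by
    rw [cast_card_erase_of_mem (mem_univ k), card_univ]
  rw [hdiag k, ← hcard, mul_comm m, mul_comm M, ← nsmul_eq_mul, ← nsmul_eq_mul]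
  exact ⟨card_nsmul_le_sum _ _ _ fun j hj => (hbound k j (ne_of_mem_erase hj).symm).1,
    sum_le_card_nsmul _ _ _ fun j hj => (hbound k j (ne_of_mem_erase hj).symm).2⟩

theorem sum_abs_le_of_mulVec_eq_single (hn : 2 < Fintype.card ι) (hm : 0 < m)
    (hdiag : ∀ i, V i i = ∑ j ∈ univ.erase i, V i j)
    (hbound : ∀ i j, i ≠ j → m ≤ V i j ∧ V i j ≤ M) {u : ι → ℝ} {l : ι} {B : ℝ}
    (hu : V *ᵥ u = Pi.single l 1) (hB : ∀ j, |u j| ≤ B) :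
    ∑ j, |u j| ≤ (1 + M / m + (Fintype.card ι - 1) / (Fintype.card ι - 2) * (M / m) ^ 2) * B := by
  have hN : (2 : ℝ) < Fintype.card ι := by exact_mod_cast hn
  obtain ⟨i₀, j₀, hij₀⟩ := Fintype.exists_pair_of_one_lt_card (by omega : 1 < Fintype.card ι)
  have hM : 0 < M := hm.trans_le ((hbound i₀ j₀ hij₀).1.trans (hbound i₀ j₀ hij₀).2)
  have hdiagV := apply_self_mem_Icc hdiag hbound
  have hVpos : ∀ k, 0 < V k k := fun k => lt_of_lt_of_le (by nlinarith) (hdiagV k).1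
  have hP : ∀ k j, 0 ≤ transitionMatrix V k j := fun k j => by
    rcases eq_or_ne j k with rfl | h
    · rw [transitionMatrix_apply_self]
    · rw [transitionMatrix_apply_of_ne h]
      exact div_nonneg (hm.le.trans (hbound k j h.symm).1) (hVpos k).le
  have hPκ : ∀ k j, transitionMatrix V k j ≤ M / (m * (Fintype.card ι - 1)) := fun k j => by
    rcases eq_or_ne j k with rfl | h
    · rw [transitionMatrix_apply_self]
      have : (0 : ℝ) < m * (Fintype.card ι - 1) := by nlinarith
      positivity
    · rw [transitionMatrix_apply_of_ne h]
      exact div_le_div₀ hM.le (hbound k j h.symm).2 (by nlinarith) (hdiagV k).1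
  have hPδ : ∀ k j, j ≠ k → m / (M * (Fintype.card ι - 1)) ≤ transitionMatrix V k j :=
    fun k j h => by
      rw [transitionMatrix_apply_of_ne h]
      exact div_le_div₀ (hm.le.trans (hbound k j h.symm).1) (hbound k j h.symm).1 (hVpos k)
        (hdiagV k).2
  have hδ : 0 < m / (M * (Fintype.card ι - 1)) := div_pos hm (by nlinarith)
  calc ∑ j, |u j| = |u l| + ∑ j ∈ univ.erase l, |u j| := (add_sum_erase _ _ (mem_univ l)).symm
    _ ≤ B + ∑ j ∈ univ.erase l, (M / (m * (Fintype.card ι - 1)) * B +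
          M / (m * (Fintype.card ι - 1)) * B /
            ((Fintype.card ι - 2) * (m / (M * (Fintype.card ι - 1))))) :=
      add_le_add (hB l) <| sum_le_sum fun j hj => abs_le_of_add_mulVec_eq_zero hn hδ hP
        (fun k => sum_transitionMatrix hdiag (hVpos k).ne') (fun k => hPκ k l) hPδ
        (fun k => add_transitionMatrix_mulVec_eq_zero (hVpos k).ne' hu) hB
        (ne_of_mem_erase hj)
    _ = _ := by
      rw [sum_const, nsmul_eq_mul, cast_card_erase_of_mem (mem_univ l), card_univ]
      have : (Fintype.card ι : ℝ) - 1 ≠ 0 := by linarith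
      have : (Fintype.card ι : ℝ) - 2 ≠ 0 := by linarith
      field_simp
      ring

theorem isUnit_det_and_sum_abs_inv_apply_le (hn : 3 ≤ Fintype.card ι) (hm : 0 < m)
    (hV : V.IsSymm) (hdiag : ∀ i, V i i = ∑ j ∈ univ.erase i, V i j)
    (hbound : ∀ i j, i ≠ j → m ≤ V i j ∧ V i j ≤ M) :
    IsUnit V.det ∧ ∀ i, ∑ j, |V⁻¹ i j| ≤ 8 * M ^ 2 / (m ^ 3 * (Fintype.card ι - 1)) := by
  have hN : (3 : ℝ) ≤ Fintype.card ι := by exact_mod_cast hn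
  obtain ⟨i₀, j₀, hij₀⟩ := Fintype.exists_pair_of_one_lt_card (by omega : 1 < Fintype.card ι)
  have hmM : m ≤ M := (hbound i₀ j₀ hij₀).1.trans (hbound i₀ j₀ hij₀).2
  have hc : 0 < m * (Fintype.card ι - 2) := by nlinarith
  have hcoer : ∀ x : ι → ℝ, m * (Fintype.card ι - 2) * ∑ i, x i ^ 2 ≤ x ⬝ᵥ V *ᵥ x := fun x => by
    nlinarith [mul_sum_sq_le_dotProduct_mulVec hV hdiag (fun i j h => (hbound i j h).1) x,
      mul_nonneg hm.le (sq_nonneg (∑ i, x i))]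
  have hdet := isUnit_det_of_coercive hc hcoer
  refine ⟨hdet, fun i => ?_⟩
  have hu := hV.mulVec_inv_row hdet i
  refine (sum_abs_le_of_mulVec_eq_single (by omega) hm hdiag hbound hu
    (abs_le_inv_of_mulVec_eq_single hc hcoer hu)).trans ?_
  have hr : 1 ≤ M / m := (one_le_div hm).2 hmM
  have hfrac : (Fintype.card ι - 1 : ℝ) / (Fintype.card ι - 2) ≤ 2 := by
    rw [div_le_iff₀ (by linarith)]; linarith
  have hinv : (m * (Fintype.card ι - 2))⁻¹ ≤ 2 / (m * (Fintype.card ι - 1)) := by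
    rw [inv_eq_one_div, div_le_div_iff₀ hc (by nlinarith)]; nlinarith
  calc _ ≤ 4 * (M / m) ^ 2 * (2 / (m * (Fintype.card ι - 1))) := by
        refine mul_le_mul ?_ hinv (by positivity) (by positivity)
        nlinarith [mul_le_mul_of_nonneg_right hfrac (sq_nonneg (M / m))]
    _ = _ := by
      have : (Fintype.card ι : ℝ) - 1 ≠ 0 := by linarith
      field_simp
      ring

end MatrixClass

/-- There is a constant `c₂` (independent of `e^{Q_n}` and `n`) such that for all
sufficiently large `n`, every `V ∈ L_n((2(1+e^{Q_n}))⁻¹, q²/2)` is invertible and the maximum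
absolute row sum norm of the inverse satisfies `‖V⁻¹‖_∞ ≤ c₂ (1+e^{Q_n})³/(n-1)`. -/
theorem inverse_row_sum_norm_bound (q : ℕ) (hq : 2 ≤ q) :
    ∃ c₂ : ℝ, 0 < c₂ ∧ ∃ N : ℕ, ∀ n : ℕ, N ≤ n →
      ∀ Q : ℝ, 0 < Q →
      ∀ V : Matrix (Fin n) (Fin n) ℝ,
        MatrixClassL n (2 * (1 + Real.exp Q))⁻¹ ((q : ℝ) ^ 2 / 2) V →
        IsUnit V.det ∧
        ∀ i : Fin n, ∑ j, |V⁻¹ i j| ≤ c₂ * (1 + Real.exp Q) ^ 3 / ((n : ℝ) - 1) := by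
  have hq₀ : (0 : ℝ) < q := by exact_mod_cast (show 0 < q by omega)
  refine ⟨16 * (q : ℝ) ^ 4, by positivity, 3, ?_⟩
  intro n hn Q _ V ⟨hV, hdiag, hbound⟩
  obtain ⟨hdet, hrow⟩ := isUnit_det_and_sum_abs_inv_apply_le (by simpa using hn)
    (by positivity) hV hdiag hbound
  refine ⟨hdet, fun i => (hrow i).trans_eq ?_⟩
  rw [Fintype.card_fin]
  field_simp
  ring
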